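/- arXiv:2304.10213 — 8 statements merged into one kernel-verified Lean document; each statement's English description precedes it below -/
import Mathlib

section
/- Let H be a group, let G be a normal subgroup of H, let a ∈ H with H generated by G together with a, and let x ∈ G. Suppose that {x, x^a} is an invariable generating set of G, i.e., for all g, h ∈ G the subgroup generated by x^g and (x^a)^h is all of G. Then for every maximal subgroup M of H with G not contained in M, we have x ∉ M (in particular, x is a totally deranged element of H). -/
theorem Subgroup.exists_mem_mul_mem_of_sup_eq_top {G : Type*} [Group G] {M N : Subgroup G}
    [N.Normal] (hMN : M ⊔ N = ⊤) (a : G) : ∃ n ∈ N, a * n ∈ M := by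
  have ha : a ∈ ((M ⊔ N : Subgroup G) : Set G) := by simp [hMN]
  rw [Subgroup.mul_normal] at ha
  obtain ⟨m, hm, n, hn, rfl⟩ := ha
  exact ⟨n⁻¹, inv_mem hn, by simpa [mul_assoc] using hm⟩

theorem invariable_gen_implies_totally_deranged_general (H : Type) [Group H]
    (G : Subgroup H) [G.Normal] (a : H)
    (x : H)
    (hinv : ∀ g ∈ G, ∀ h ∈ G,
      Subgroup.closure {g⁻¹ * x * g, h⁻¹ * (a⁻¹ * x * a) * h} = G) :
    ∀ M : Subgroup H, IsCoatom M → ¬ G ≤ M → x ∉ M := by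
  intro M hM hGM hxM
  -- Maximality gives `H = M G`, so some conjugate of `x^a` by an element of `G` is a conjugate of
  -- `x` by an element of `M`; with `x` itself these generate `G` inside `M`.
  have hMG : M ⊔ G = ⊤ := codisjoint_iff.mp (hM.not_le_iff_codisjoint.mp hGM)
  obtain ⟨h, hhG, hahM⟩ := Subgroup.exists_mem_mul_mem_of_sup_eq_top hMG a
  apply hGM
  rw [← hinv 1 (one_mem G) h hhG, Subgroup.closure_le]
  rintro y (rfl | rfl)
  · simpa using hxM
  · have hconj : h⁻¹ * (a⁻¹ * x * a) * h = (a * h)⁻¹ * x * (a * h) := by group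
    rw [SetLike.mem_coe, hconj]
    exact mul_mem (mul_mem (inv_mem hahM) hxM) hahM

/-- If `{x, x^a}` is an invariable generating set of a normal subgroup `G` of `H = ⟨G, a⟩`,
then `x` lies in no maximal subgroup of `H` that does not contain `G`
(so `x` is a totally deranged element of `H`). -/
theorem invariable_gen_implies_totally_deranged (H : Type) [Group H]
    (G : Subgroup H) [G.Normal] (a : H)
    (hgen : G ⊔ Subgroup.closure {a} = ⊤)
    (x : H) (hx : x ∈ G)
    (hinv : ∀ g ∈ G, ∀ h ∈ G,
      Subgroup.closure {g⁻¹ * x * g, h⁻¹ * (a⁻¹ * x * a) * h} = G) :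
    ∀ M : Subgroup H, IsCoatom M → ¬ G ≤ M → x ∉ M :=
  invariable_gen_implies_totally_deranged_general H G a x hinv
end

section
/- Let n ≥ 5 and let x be an element of the symmetric group Sym(n). Then there exists a maximal subgroup M of Sym(n) such that x ∈ M and the alternating group Alt(n) is not contained in M (equivalently, M has trivial normal core). In particular, Sym(n) has no totally deranged elements. -/
/-!
It suffices to put `x` into a proper subgroup `H` containing an odd permutation: a maximal
subgroup `M ≥ H` cannot contain `Alt(n)`, since `Alt(n)` has index 2 and `H ≰ Alt(n)`.

If `x` is not an `n`-cycle, let `H` be the stabilizer of the partition of the points into the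
cycle of `x` through some point and its complement; by pigeonhole one part has two points, so `H`
contains a transposition. If `x` is an `n`-cycle, it is `t ↦ t + 1` in suitable coordinates
`ZMod n`. For composite `n` with a divisor `1 < d < n`, let `H` be the stabilizer of the
partition into residue classes mod `d`. For prime `n = p ≥ 5`, let `H` be the affine group
`t ↦ u t + c`, which contains multiplication by a primitive root: a `(p - 1)`-cycle.
-/

open Equiv Equiv.Perm

namespace Setoid

variable {α : Type*}

def stabilizer (r : Setoid α) : Subgroup (Perm α) where
  carrier := {g | ∀ a b, r (g a) (g b) ↔ r a b}
  one_mem' _ _ := Iff.rfl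
  mul_mem' {g h} hg hh a b := (hg (h a) (h b)).trans (hh a b)
  inv_mem' {g} hg a b := by simpa using (hg (g⁻¹ a) (g⁻¹ b)).symm

variable {r : Setoid α} {g : Perm α}

theorem mem_stabilizer_of_rel_apply (h : ∀ a, r (g a) a) : g ∈ r.stabilizer := fun a b =>
  ⟨fun hab => r.trans (r.symm (h a)) (r.trans hab (h b)),
    fun hab => r.trans (h a) (r.trans hab (r.symm (h b)))⟩

theorem ker_mem_stabilizer {β : Type*} {f : α → β} {σ : β → β} (hσ : σ.Injective)
    (h : Function.Semiconj f g σ) : g ∈ (ker f).stabilizer := fun a b => by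
  simp only [ker_def, h.eq, hσ.eq_iff]

theorem exists_ne_rel_of_ne_bot (hr : r ≠ ⊥) : ∃ a c, a ≠ c ∧ r a c := by
  contrapose! hr
  exact le_bot_iff.mp fun a c hac => by_contra fun hne => hr a c hne hac

variable [DecidableEq α]

theorem swap_mem_stabilizer {a b : α} (h : r a b) : swap a b ∈ r.stabilizer :=
  mem_stabilizer_of_rel_apply fun u => by
    rcases eq_or_ne u a with rfl | hua
    · simpa using r.symm h
    rcases eq_or_ne u b with rfl | hub
    · simpa using h
    · rw [swap_apply_of_ne_of_ne hua hub]

theorem swap_notMem_stabilizer {a b c : α} (hac : r a c) (hne : a ≠ c) (hab : ¬ r a b) :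
    swap a b ∉ r.stabilizer := fun hmem => by
  have hcb : c ≠ b := by rintro rfl; exact hab hac
  have hbc := (hmem a c).mpr hac
  rw [swap_apply_left, swap_apply_of_ne_of_ne hne.symm hcb] at hbc
  exact hab (r.trans hac (r.symm hbc))

theorem stabilizer_ne_top (hbot : r ≠ ⊥) (htop : r ≠ ⊤) : r.stabilizer ≠ ⊤ := by
  obtain ⟨a, c, hne, hac⟩ := exists_ne_rel_of_ne_bot hbot
  obtain ⟨a', b', hab'⟩ : ∃ a' b', ¬ r a' b' := by simpa [eq_top_iff] using htop
  obtain ⟨b, hab⟩ : ∃ b, ¬ r a b := by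
    by_cases haa' : r a a'
    · exact ⟨b', fun hab => hab' (r.trans (r.symm haa') hab)⟩
    · exact ⟨a', haa'⟩
  exact fun htop => swap_notMem_stabilizer hac hne hab (htop ▸ Subgroup.mem_top _)

theorem not_stabilizer_le_alternatingGroup [Fintype α] (hbot : r ≠ ⊥) :
    ¬ r.stabilizer ≤ alternatingGroup α := fun hle => by
  obtain ⟨a, c, hne, hac⟩ := exists_ne_rel_of_ne_bot hbot
  have := hle (swap_mem_stabilizer hac)
  rw [mem_alternatingGroup, sign_swap hne] at this
  exact absurd this (by decide)

end Setoid

def affineSubgroup (R : Type*) [CommRing R] : Subgroup (Perm R) where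
  carrier := {g | ∃ u : Rˣ, ∃ c : R, ∀ t, g t = u * t + c}
  one_mem' := ⟨1, 0, fun t => by simp⟩
  mul_mem' := by
    rintro g h ⟨u, c, hg⟩ ⟨v, d, hh⟩
    exact ⟨u * v, u * d + c, fun t => by simp only [Perm.mul_apply, hg, hh, Units.val_mul]; ring⟩
  inv_mem' := by
    rintro g ⟨u, c, hg⟩
    refine ⟨u⁻¹, -(↑u⁻¹ * c), fun t => g.injective ?_⟩
    rw [coe_inv, apply_symm_apply, hg, mul_add, mul_neg, Units.mul_inv_cancel_left,
      Units.mul_inv_cancel_left, neg_add_cancel_right]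

section Affine

variable {R : Type*} [CommRing R]

theorem mem_affineSubgroup {g : Perm R} :
    g ∈ affineSubgroup R ↔ ∃ u : Rˣ, ∃ c : R, ∀ t, g t = u * t + c := Iff.rfl

theorem addRight_mem_affineSubgroup (c : R) : Equiv.addRight c ∈ affineSubgroup R :=
  ⟨1, c, fun t => by simp⟩

theorem affineSubgroup_ne_top (h2 : (2 : R) ≠ 0) (h3 : (3 : R) ≠ 0) :
    affineSubgroup R ≠ ⊤ := by
  classical
  have h1 : (1 : R) ≠ 0 := fun h => h2 (by rw [← one_add_one_eq_two, h, add_zero])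
  have h21 : (2 : R) ≠ 1 := fun h => h1 (by linear_combination h)
  have h31 : (3 : R) ≠ 1 := fun h => h2 (by linear_combination h)
  intro htop
  obtain ⟨u, c, hf⟩ := mem_affineSubgroup.mp (htop ▸ Subgroup.mem_top (swap (0 : R) 1))
  have e2 := hf 2
  have e3 := hf 3
  have e0 := hf 0
  rw [swap_apply_of_ne_of_ne h2 h21] at e2
  rw [swap_apply_of_ne_of_ne h3 h31] at e3
  rw [swap_apply_left, mul_zero, zero_add] at e0
  -- `swap 0 1` fixes `2` and `3`, which forces `u = 1` and `c = 0`
  exact h1 (by linear_combination e0 - 3 * e2 + 2 * e3)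

end Affine

namespace ZMod

theorem sign_toPermHom_of_forall_mem_zpowers {p : ℕ} [Fact p.Prime] (hp : p ≠ 2)
    {r : (ZMod p)ˣ} (hr : ∀ u, u ∈ Subgroup.zpowers r) :
    sign (MulAction.toPermHom (ZMod p)ˣ (ZMod p) r) = -1 := by
  have : Fact (2 < p) := ⟨lt_of_le_of_ne (Fact.out : p.Prime).two_le (Ne.symm hp)⟩
  set g := MulAction.toPermHom (ZMod p)ˣ (ZMod p) r
  have hr1 : (r : ZMod p) - 1 ≠ 0 := by
    intro h
    have hr1 : r = 1 := Units.ext (sub_eq_zero.mp h)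
    have := hr (-1)
    rw [hr1, Subgroup.zpowers_one_eq_bot, Subgroup.mem_bot] at this
    exact neg_one_ne_one (congrArg Units.val this)
  have hfix (t : ZMod p) : g t = t ↔ t = 0 := by
    have : g t - t = (r - 1) * t := by
      simp only [g, MulAction.toPermHom_apply, MulAction.toPerm_apply, Units.smul_def]
      ring
    rw [← sub_eq_zero, this, mul_eq_zero, or_iff_right hr1]
  have hcycle : g.IsCycle := by
    refine ⟨1, by simp [hfix], fun y hy => ?_⟩
    have hy0 : y ≠ 0 := fun h => hy ((hfix y).mpr h)
    obtain ⟨k, hk⟩ := Subgroup.mem_zpowers_iff.mp (hr (Units.mk0 y hy0))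
    refine ⟨k, ?_⟩
    rw [← map_zpow, hk]
    simp [Units.smul_def]
  have hsupport : g.support = Finset.univ.erase 0 := by
    ext t
    simp [hfix]
  rw [hcycle.sign, hsupport, Finset.card_erase_of_mem (Finset.mem_univ _), Finset.card_univ,
    ZMod.card, ((Fact.out : p.Prime).even_sub_one hp).neg_one_pow]

theorem not_affineSubgroup_le_alternatingGroup {p : ℕ} [Fact p.Prime] (hp : p ≠ 2) :
    ¬ affineSubgroup (ZMod p) ≤ alternatingGroup (ZMod p) := fun hle => by
  obtain ⟨r, hr⟩ := IsCyclic.exists_generator (α := (ZMod p)ˣ)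
  have hmem : MulAction.toPermHom (ZMod p)ˣ (ZMod p) r ∈ affineSubgroup (ZMod p) :=
    ⟨r, 0, fun t => by simp [Units.smul_def]⟩
  have := hle hmem
  rw [mem_alternatingGroup, sign_toPermHom_of_forall_mem_zpowers hp hr] at this
  exact absurd this (by decide)

end ZMod

namespace Equiv.Perm

variable {α : Type*} [Fintype α]

theorem exists_zmod_equiv_of_isCycleOn_univ [Nonempty α] {x : Perm α}
    (hx : x.IsCycleOn _root_.Set.univ) :
    ∃ e : ZMod (Fintype.card α) ≃ α, e.permCongr (Equiv.addRight 1) = x := by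
  set n := Fintype.card α
  obtain ⟨a⟩ := ‹Nonempty α›
  have hx' : x.IsCycleOn (Finset.univ : Finset α) := by rwa [Finset.coe_univ]
  have hpow (i j : ℕ) : (x ^ i) a = (x ^ j) a ↔ (i : ZMod n) = j := by
    rw [hx'.pow_apply_eq_pow_apply (Finset.mem_univ a), Finset.card_univ,
      ZMod.natCast_eq_natCast_iff]
  set φ : ZMod n → α := fun k => (x ^ k.val) a
  have hinj : φ.Injective := fun k l h => by
    simpa only [ZMod.natCast_zmod_val] using (hpow _ _).mp h
  let e := Equiv.ofBijective φ
    ((Fintype.bijective_iff_injective_and_card φ).mpr ⟨hinj, ZMod.card n⟩)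
  refine ⟨e, Equiv.ext fun b => ?_⟩
  obtain ⟨k, rfl⟩ := e.surjective b
  rw [permCongr_apply, symm_apply_apply, coe_addRight]
  change (x ^ (k + 1).val) a = x ((x ^ k.val) a)
  rw [← Perm.mul_apply, ← pow_succ', hpow]
  simp

variable [DecidableEq α]

def InOddProperSubgroup (x : Perm α) : Prop :=
  ∃ H : Subgroup (Perm α), H ≠ ⊤ ∧ x ∈ H ∧ ¬ H ≤ alternatingGroup α

theorem InOddProperSubgroup.permCongr {β : Type*} [Fintype β] [DecidableEq β] {x : Perm α}
    (h : x.InOddProperSubgroup) (e : α ≃ β) : (e.permCongr x).InOddProperSubgroup := by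
  obtain ⟨H, hH, hx, hodd⟩ := h
  obtain ⟨g, hg, hgodd⟩ := SetLike.not_le_iff_exists.mp hodd
  set φ := e.permCongrHom.toMonoidHom
  refine ⟨H.map φ, fun htop => hH ?_, ⟨x, hx, rfl⟩, fun hle => hgodd ?_⟩
  · apply Subgroup.map_injective (f := φ) e.permCongrHom.injective
    rw [htop, Subgroup.map_top_of_surjective _ e.permCongrHom.surjective]
  · have := hle ⟨g, hg, rfl⟩
    rwa [mem_alternatingGroup, MulEquiv.coe_toMonoidHom, permCongrHom_coe, sign_permCongr] at this

theorem inOddProperSubgroup_of_not_isCycleOn_univ (hα : 3 ≤ Fintype.card α) {x : Perm α}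
    (hx : ¬ x.IsCycleOn _root_.Set.univ) : x.InOddProperSubgroup := by
  obtain ⟨z, b, hzb⟩ : ∃ z b, ¬ x.SameCycle z b := by
    simpa [IsCycleOn, Set.bijOn_univ, x.bijective] using hx
  set r := Setoid.ker (x.SameCycle z)
  have hbot : r ≠ ⊥ := by
    rw [Ne, Setoid.ker_eq_bot_iff]
    intro hinj
    have := Fintype.card_le_of_injective _ hinj
    rw [Fintype.card_prop] at this
    omega
  have htop : r ≠ ⊤ := by
    rw [Ne, Setoid.eq_top_iff]
    intro h
    simpa [r, Setoid.ker_def, hzb, SameCycle.refl] using h z b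
  refine ⟨r.stabilizer, Setoid.stabilizer_ne_top hbot htop, ?_,
    Setoid.not_stabilizer_le_alternatingGroup hbot⟩
  exact Setoid.ker_mem_stabilizer Function.injective_id fun a => propext sameCycle_apply_right

end Equiv.Perm

namespace ZMod

theorem inOddProperSubgroup_addRight_one_of_not_prime {n : ℕ} [NeZero n] (h2 : 2 ≤ n)
    (hn : ¬ n.Prime) : (Equiv.addRight (1 : ZMod n)).InOddProperSubgroup := by
  obtain ⟨d, hd, h1d, hdn⟩ := Nat.exists_dvd_of_not_prime2 h2 hn
  have : Fact (1 < d) := ⟨h1d⟩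
  set π := castHom hd (ZMod d)
  set r := Setoid.ker π
  have hbot : r ≠ ⊥ := by
    rw [Ne, Setoid.ker_eq_bot_iff]
    intro hinj
    have hd0 : ((d : ℕ) : ZMod n) ≠ 0 := by
      rw [Ne, natCast_eq_zero_iff]
      exact fun h => absurd (Nat.le_of_dvd (by omega) h) (by omega)
    exact hd0 (hinj (by simp [π]))
  have htop : r ≠ ⊤ := by
    rw [Ne, Setoid.eq_top_iff]
    intro h
    simpa [r, Setoid.ker_def, π, map_one] using h 0 1
  refine ⟨r.stabilizer, Setoid.stabilizer_ne_top hbot htop, ?_,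
    Setoid.not_stabilizer_le_alternatingGroup hbot⟩
  exact Setoid.ker_mem_stabilizer (add_left_injective 1) fun t => by
    simp only [π, coe_addRight, map_add, map_one]

theorem inOddProperSubgroup_addRight_one_of_prime {p : ℕ} [Fact p.Prime] (hp : 5 ≤ p) :
    (Equiv.addRight (1 : ZMod p)).InOddProperSubgroup := by
  have hcast (k : ℕ) (hk : k < p) (hk0 : k ≠ 0) : (k : ZMod p) ≠ 0 := by
    rw [Ne, natCast_eq_zero_iff]
    exact fun h => hk0 (Nat.eq_zero_of_dvd_of_lt h hk)
  refine ⟨affineSubgroup (ZMod p), affineSubgroup_ne_top ?_ ?_, addRight_mem_affineSubgroup 1,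
    not_affineSubgroup_le_alternatingGroup (by omega)⟩
  · exact_mod_cast hcast 2 (by omega) two_ne_zero
  · exact_mod_cast hcast 3 (by omega) three_ne_zero

end ZMod

namespace Equiv.Perm

variable {α : Type*} [Fintype α] [DecidableEq α]

theorem inOddProperSubgroup (hα : 4 ≤ Fintype.card α) (x : Perm α) : x.InOddProperSubgroup := by
  by_cases hx : x.IsCycleOn _root_.Set.univ
  · have : Nonempty α := Fintype.card_pos_iff.mp (by omega)
    obtain ⟨e, rfl⟩ := exists_zmod_equiv_of_isCycleOn_univ hx
    refine InOddProperSubgroup.permCongr ?_ e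
    by_cases hp : (Fintype.card α).Prime
    · have := Fact.mk hp
      exact ZMod.inOddProperSubgroup_addRight_one_of_prime
        (hp.five_le_of_ne_two_of_ne_three (by omega) (by omega))
    · exact ZMod.inOddProperSubgroup_addRight_one_of_not_prime (by omega) hp
  · exact inOddProperSubgroup_of_not_isCycleOn_univ (by omega) hx

theorem exists_isCoatom_le_not_alternatingGroup_le {H : Subgroup (Perm α)} (hH : H ≠ ⊤)
    (hodd : ¬ H ≤ alternatingGroup α) :
    ∃ M : Subgroup (Perm α), IsCoatom M ∧ H ≤ M ∧ ¬ alternatingGroup α ≤ M := by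
  obtain ⟨M, hM, hHM⟩ := (eq_top_or_exists_le_coatom H).resolve_left hH
  refine ⟨M, hM, hHM, fun hAM => ?_⟩
  have : Nontrivial α := by
    by_contra h
    rw [not_nontrivial_iff_subsingleton] at h
    exact hodd fun g _ => by simp [Subsingleton.elim g 1]
  rcases (Nat.dvd_prime Nat.prime_two).mp
    (alternatingGroup.index_eq_two (α := α) ▸ Subgroup.index_dvd_of_le hAM) with h1 | h2
  · exact hM.1 (Subgroup.index_eq_one.mp h1)
  · exact hodd (hHM.trans (eq_alternatingGroup_of_index_eq_two h2).le)

end Equiv.Perm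

/-- For `n ≥ 5`, every element of `Sym(n)` lies in a maximal subgroup not containing
`Alt(n)` (equivalently, a core-free maximal subgroup); in particular, `Sym(n)` has no
totally deranged elements. -/
theorem symmetric_group_no_totally_deranged (n : ℕ) (hn : 5 ≤ n)
    (x : Equiv.Perm (Fin n)) :
    ∃ M : Subgroup (Equiv.Perm (Fin n)), IsCoatom M ∧ x ∈ M ∧
      ¬ alternatingGroup (Fin n) ≤ M := by
  obtain ⟨H, hH, hxH, hodd⟩ := inOddProperSubgroup (by rw [Fintype.card_fin]; omega) x
  obtain ⟨M, hM, hHM, hAM⟩ := exists_isCoatom_le_not_alternatingGroup_le hH hodd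
  exact ⟨M, hM, hHM hxH, hAM⟩
end

section
/- Let L be a group, let X be a normal subgroup of L, and let σ₁, σ₂ ∈ L with σ₁σ₂ = σ₂σ₁. Let Y be a subgroup of X with σ₁Yσ₁⁻¹ = Y and σ₂Yσ₂⁻¹ = Y, and assume that for each i ∈ {1, 2} every element of the coset Y·σᵢ is conjugate to σᵢ by an element of Y. Let a ∈ X, set g = a σ₂ a⁻¹ and h = a⁻¹ σ₁ a, and assume g σ₁ = σ₁ g. Then there exists c ∈ X with c σ₁ = σ₁ c and c⁻¹ g c ∈ Y·σ₂ if and only if there exists d ∈ X with d σ₂ = σ₂ d and d⁻¹ h d ∈ Y·σ₁. -/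
/-!
If `c ∈ X_{σ₁}` conjugates `g = a σ₂ a⁻¹` into `Y·σ₂`, the Lang property for `σ₂` gives
`u ∈ Y` conjugating further to `σ₂` itself, so `d = a⁻¹ c u` centralises `σ₂`. Since `c`
commutes with `σ₁`, this `d` conjugates `h = a⁻¹ σ₁ a` to `u⁻¹ σ₁ u`, which lies in `Y·σ₁`
because `σ₁` normalises `Y`. The converse is the same argument for `(a⁻¹, σ₂, σ₁)`.
-/

variable {G : Type*} [Group G]

lemma exists_inv_mul_mul_eq_mul {Y : Subgroup G} {σ u : G}
    (hσ : ∀ y ∈ Y, σ * y * σ⁻¹ ∈ Y) (hu : u ∈ Y) :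
    ∃ y ∈ Y, u⁻¹ * σ * u = y * σ :=
  ⟨u⁻¹ * (σ * u * σ⁻¹), mul_mem (inv_mem hu) (hσ u hu), by group⟩

lemma shintani_descent_of_lang {X Y : Subgroup G} (hYX : Y ≤ X) {σ₁ σ₂ : G}
    (hY : ∀ y ∈ Y, σ₁ * y * σ₁⁻¹ ∈ Y)
    (hLang : ∀ y ∈ Y, ∃ u ∈ Y, u⁻¹ * (y * σ₂) * u = σ₂) {a : G} (ha : a ∈ X)
    (hg : ∃ c ∈ X, c * σ₁ = σ₁ * c ∧ ∃ y ∈ Y, c⁻¹ * (a * σ₂ * a⁻¹) * c = y * σ₂) :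
    ∃ d ∈ X, d * σ₂ = σ₂ * d ∧ ∃ y ∈ Y, d⁻¹ * (a⁻¹ * σ₁ * a) * d = y * σ₁ := by
  obtain ⟨c, hcX, hcσ, y, hyY, hcy⟩ := hg
  obtain ⟨u, huY, hu⟩ := hLang y hyY
  have hconj : (a⁻¹ * c * u)⁻¹ * (a⁻¹ * σ₁ * a) * (a⁻¹ * c * u) = u⁻¹ * σ₁ * u :=
    calc _ = u⁻¹ * (c⁻¹ * (σ₁ * c)) * u := by group
      _ = u⁻¹ * σ₁ * u := by rw [← hcσ]; group
  refine ⟨a⁻¹ * c * u, mul_mem (mul_mem (inv_mem ha) hcX) (hYX huY), ?_, ?_⟩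
  · calc a⁻¹ * c * u * σ₂ = a⁻¹ * c * u * (u⁻¹ * (y * σ₂) * u) := by rw [hu]
      _ = a⁻¹ * c * u * (u⁻¹ * (c⁻¹ * (a * σ₂ * a⁻¹) * c) * u) := by rw [hcy]
      _ = σ₂ * (a⁻¹ * c * u) := by group
  · rw [hconj]
    exact exists_inv_mul_mul_eq_mul hY huY

theorem shintani_descent_subgroups_general (L : Type) [Group L] (X : Subgroup L)
    (σ₁ σ₂ : L)
    (Y : Subgroup L) (hYX : Y ≤ X)
    (hY1 : ∀ y : L, y ∈ Y ↔ σ₁ * y * σ₁⁻¹ ∈ Y)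
    (hY2 : ∀ y : L, y ∈ Y ↔ σ₂ * y * σ₂⁻¹ ∈ Y)
    (hLang1 : ∀ y ∈ Y, ∃ u ∈ Y, u⁻¹ * (y * σ₁) * u = σ₁)
    (hLang2 : ∀ y ∈ Y, ∃ u ∈ Y, u⁻¹ * (y * σ₂) * u = σ₂)
    (a : L) (ha : a ∈ X) :
    (∃ c ∈ X, c * σ₁ = σ₁ * c ∧
        ∃ y ∈ Y, c⁻¹ * (a * σ₂ * a⁻¹) * c = y * σ₂) ↔
    (∃ d ∈ X, d * σ₂ = σ₂ * d ∧
        ∃ y ∈ Y, d⁻¹ * (a⁻¹ * σ₁ * a) * d = y * σ₁) := by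
  refine ⟨shintani_descent_of_lang hYX (fun y => (hY1 y).mp) hLang2 ha, fun hh => ?_⟩
  simpa only [inv_inv] using
    shintani_descent_of_lang hYX (fun y => (hY2 y).mp) hLang1 (inv_mem ha)
      (by simpa only [inv_inv] using hh)

/-- Abstract form of Shintani descent for algebraic subgroups (Theorem 2.4): with
`g = a σ₂ a⁻¹` and `h = a⁻¹ σ₁ a`, the element `g` lies in an `X_{σ₁}`-conjugate of the
coset `Y·σ₂` if and only if `h` lies in an `X_{σ₂}`-conjugate of the coset `Y·σ₁`. -/
theorem shintani_descent_subgroups (L : Type) [Group L] (X : Subgroup L) [X.Normal]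
    (σ₁ σ₂ : L) (hcomm : σ₁ * σ₂ = σ₂ * σ₁)
    (Y : Subgroup L) (hYX : Y ≤ X)
    (hY1 : ∀ y : L, y ∈ Y ↔ σ₁ * y * σ₁⁻¹ ∈ Y)
    (hY2 : ∀ y : L, y ∈ Y ↔ σ₂ * y * σ₂⁻¹ ∈ Y)
    (hLang1 : ∀ y ∈ Y, ∃ u ∈ Y, u⁻¹ * (y * σ₁) * u = σ₁)
    (hLang2 : ∀ y ∈ Y, ∃ u ∈ Y, u⁻¹ * (y * σ₂) * u = σ₂)
    (a : L) (ha : a ∈ X)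
    (hg : (a * σ₂ * a⁻¹) * σ₁ = σ₁ * (a * σ₂ * a⁻¹)) :
    (∃ c ∈ X, c * σ₁ = σ₁ * c ∧
        ∃ y ∈ Y, c⁻¹ * (a * σ₂ * a⁻¹) * c = y * σ₂) ↔
    (∃ d ∈ X, d * σ₂ = σ₂ * d ∧
        ∃ y ∈ Y, d⁻¹ * (a⁻¹ * σ₁ * a) * d = y * σ₁) :=
  shintani_descent_subgroups_general L X σ₁ σ₂ Y hYX hY1 hY2 hLang1 hLang2 a ha
end

section
/- Let L be a group, let X be a normal subgroup of L, and let σ ∈ L; assume that for every integer j ≥ 1, every element of the coset X·σ^j is conjugate to σ^j by an element of X (the Lang property). Let l, m be positive integers with l dividing m, and let k be a prime divisor of m. Let a ∈ X, set g = a σ^l a⁻¹ and h = a⁻¹ σ^m a, and assume g σ^m = σ^m g. Then the following are equivalent: (1) there exists c ∈ X with c σ^m = σ^m c such that c⁻¹ g c ∈ X_{σ^{m/k}}·σ^l; (2) there exist z ∈ X·σ^{m/k} with z σ^l = σ^l z and d ∈ X with d σ^l = σ^l d such that d⁻¹ h d = z^k. -/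
/-!
Put `τ = σ^(m/k)`, so that `σ^m = τ^k` and `τ` commutes with `s = σ^l`. If `c⁻¹ g c = y s`
with `y` centralising `τ`, then `b = a⁻¹ c` conjugates `s` into the centraliser of `τ`, so
`z = b τ b⁻¹` lies in `X τ`, commutes with `s`, and `z^k = b τ^k b⁻¹ = h` because `c`
centralises `τ^k`. Conversely, the Lang property writes `z = u τ u⁻¹` with `u ∈ X`, and
`c = a d u` does the job: it centralises `u⁻¹ z^k u = τ^k`, and `c⁻¹ g c = u⁻¹ s u`, which lies
in `X s` and commutes with `u⁻¹ z u = τ`.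
-/

section

variable {L : Type*} [Group L] {X : Subgroup L} [X.Normal]

theorem Subgroup.exists_conj_eq_mul_of_mem {b : L} (hb : b ∈ X) (t : L) :
    ∃ v ∈ X, b * t * b⁻¹ = v * t :=
  ⟨b * (t * b⁻¹ * t⁻¹), mul_mem hb (‹X.Normal›.conj_mem _ (inv_mem hb) t), by group⟩

variable {s τ a : L} {k : ℕ}

theorem exists_pow_eq_conj_of_conj_eq_mul (hτs : Commute τ s) (ha : a ∈ X)
    {c y : L} (hc : c ∈ X) (hcτ : Commute c (τ ^ k)) (hyτ : Commute y τ)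
    (hcy : c⁻¹ * (a * s * a⁻¹) * c = y * s) :
    ∃ z : L, (∃ v ∈ X, z = v * τ) ∧ Commute z s ∧
      ∃ d ∈ X, Commute d s ∧ d⁻¹ * (a⁻¹ * τ ^ k * a) * d = z ^ k := by
  obtain ⟨b, hb, rfl⟩ : ∃ b ∈ X, c = a * b := ⟨a⁻¹ * c, mul_mem (inv_mem ha) hc, by group⟩
  have hbs : b⁻¹ * s * b = y * s := by rw [← hcy]; group
  have hzs : Commute (b * τ * b⁻¹) s := by
    have := ((hyτ.mul_left hτs.symm).conj b).symm
    rwa [← hbs, show b * (b⁻¹ * s * b) * b⁻¹ = s by group] at this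
  obtain ⟨v, hv, hz⟩ := Subgroup.exists_conj_eq_mul_of_mem hb τ
  refine ⟨b * τ * b⁻¹, ⟨v, hv, hz⟩, hzs, 1, one_mem X, Commute.one_left s, ?_⟩
  calc (1 : L)⁻¹ * (a⁻¹ * τ ^ k * a) * 1 = a⁻¹ * (a * b * τ ^ k * (a * b)⁻¹) * a := by
        rw [hcτ.eq, mul_inv_cancel_right]; group
    _ = b * τ ^ k * b⁻¹ := by group
    _ = (b * τ * b⁻¹) ^ k := conj_pow.symm

theorem exists_conj_eq_mul_of_pow_eq_conj
    (hLang : ∀ x ∈ X, ∃ u ∈ X, u⁻¹ * (x * τ) * u = τ) (hτs : Commute τ s) (ha : a ∈ X)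
    {v d : L} (hv : v ∈ X) (hzs : Commute (v * τ) s) (hd : d ∈ X) (hds : Commute d s)
    (hdh : d⁻¹ * (a⁻¹ * τ ^ k * a) * d = (v * τ) ^ k) :
    ∃ c ∈ X, Commute c (τ ^ k) ∧
      ∃ y ∈ X, Commute y τ ∧ c⁻¹ * (a * s * a⁻¹) * c = y * s := by
  obtain ⟨u, hu, huz⟩ := hLang v hv
  obtain ⟨y, hy, hys⟩ := Subgroup.exists_conj_eq_mul_of_mem (inv_mem hu) s
  rw [inv_inv] at hys
  have hcτ : (a * d * u)⁻¹ * τ ^ k * (a * d * u) = τ ^ k := by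
    calc (a * d * u)⁻¹ * τ ^ k * (a * d * u) = u⁻¹ * (d⁻¹ * (a⁻¹ * τ ^ k * a) * d) * u := by
          group
      _ = u⁻¹ * (v * τ) ^ k * u := by rw [hdh]
      _ = (u⁻¹ * (v * τ) * u) ^ k := by simpa using (conj_pow (a := u⁻¹)).symm
      _ = τ ^ k := by rw [huz]
  have hyτ : Commute (y * s) τ := by
    have := hzs.symm.conj u⁻¹
    rwa [inv_inv, huz, hys] at this
  refine ⟨a * d * u, mul_mem (mul_mem ha hd) hu, ?_, y, hy, ?_, ?_⟩
  · rw [commute_iff_eq]; nth_rw 1 [← hcτ]; group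
  · simpa using hyτ.mul_left hτs.symm.inv_left
  · calc (a * d * u)⁻¹ * (a * s * a⁻¹) * (a * d * u) = u⁻¹ * (d⁻¹ * s * d) * u := by group
      _ = y * s := by rw [hds.inv_mul_cancel, hys]

end

theorem shintani_descent_subfields_general (L : Type) [Group L] (X : Subgroup L) [X.Normal]
    (σ : L)
    (hLang : ∀ j : ℕ, 1 ≤ j → ∀ x ∈ X, ∃ u ∈ X, u⁻¹ * (x * σ ^ j) * u = σ ^ j)
    (l m : ℕ) (hm : 0 < m)
    (k : ℕ) (hkm : k ∣ m)
    (a : L) (ha : a ∈ X) :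
    (∃ c ∈ X, c * σ ^ m = σ ^ m * c ∧
        ∃ y ∈ X, y * σ ^ (m / k) = σ ^ (m / k) * y ∧
          c⁻¹ * (a * σ ^ l * a⁻¹) * c = y * σ ^ l) ↔
    (∃ z : L, (∃ v ∈ X, z = v * σ ^ (m / k)) ∧ z * σ ^ l = σ ^ l * z ∧
        ∃ d ∈ X, d * σ ^ l = σ ^ l * d ∧
          d⁻¹ * (a⁻¹ * σ ^ m * a) * d = z ^ k) := by
  have hmk : 1 ≤ m / k :=
    Nat.div_pos (Nat.le_of_dvd hm hkm) (Nat.pos_of_dvd_of_pos hkm hm)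
  have hτs : Commute (σ ^ (m / k)) (σ ^ l) := Commute.pow_pow_self σ _ _
  rw [show σ ^ m = (σ ^ (m / k)) ^ k by rw [← pow_mul, Nat.div_mul_cancel hkm]]
  constructor
  · rintro ⟨c, hc, hcτ, y, -, hyτ, hcy⟩
    exact exists_pow_eq_conj_of_conj_eq_mul hτs ha hc hcτ hyτ hcy
  · rintro ⟨_, ⟨v, hv, rfl⟩, hzs, d, hd, hds, hdh⟩
    exact exists_conj_eq_mul_of_pow_eq_conj (hLang _ hmk) hτs ha hv hzs hd hds hdh

/-- Abstract form of Shintani descent and subfield subgroups (Theorem 2.6): with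
`g = a σ^l a⁻¹` (representing an element of `X_{σ^m}·σ^l`) and `h = a⁻¹ σ^m a` its
Shintani correspondent, `g` lies in an `X_{σ^m}`-conjugate of `X_{σ^{m/k}}·σ^l` if and
only if the Shintani correspondent is a `k`-th power of an element of the coset
`X_{σ^l}·σ^{m/k}`. -/
theorem shintani_descent_subfields (L : Type) [Group L] (X : Subgroup L) [X.Normal]
    (σ : L)
    (hLang : ∀ j : ℕ, 1 ≤ j → ∀ x ∈ X, ∃ u ∈ X, u⁻¹ * (x * σ ^ j) * u = σ ^ j)
    (l m : ℕ) (hl : 0 < l) (hm : 0 < m) (hlm : l ∣ m)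
    (k : ℕ) (hk : k.Prime) (hkm : k ∣ m)
    (a : L) (ha : a ∈ X)
    (hg : (a * σ ^ l * a⁻¹) * σ ^ m = σ ^ m * (a * σ ^ l * a⁻¹)) :
    (∃ c ∈ X, c * σ ^ m = σ ^ m * c ∧
        ∃ y ∈ X, y * σ ^ (m / k) = σ ^ (m / k) * y ∧
          c⁻¹ * (a * σ ^ l * a⁻¹) * c = y * σ ^ l) ↔
    (∃ z : L, (∃ v ∈ X, z = v * σ ^ (m / k)) ∧ z * σ ^ l = σ ^ l * z ∧
        ∃ d ∈ X, d * σ ^ l = σ ^ l * d ∧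
          d⁻¹ * (a⁻¹ * σ ^ m * a) * d = z ^ k) :=
  shintani_descent_subfields_general L X σ hLang l m hm k hkm a ha
end

section
/- Let L be a group, let X be a normal subgroup of L all of whose elements have finite order, and let σ ∈ L; assume that for every integer j ≥ 1, every element of the coset X·σ^j is conjugate to σ^j by an element of X (the Lang property). Let e, k ≥ 1 be coprime integers and let y ∈ X with σ^k y = y σ^k. Then y is conjugate by an element of X to an element of X_σ if and only if there exist z ∈ X·σ^e with z σ^k = σ^k z and c ∈ X such that c⁻¹ y c = z^k σ^{-ek}. -/
/-!
Write `e a + k b = 1`. For commuting `w` and `σ`, the substitution `x = w^b σ^e`, `s = w^{-a} σ^k`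
is unimodular, with inverse `w = x^k s^{-e}` and `σ = x^a s^b`. If `w ∈ X_σ`, then `s ∈ X σ^k`
is `X`-conjugate to `σ^k` by the Lang property, and the same conjugate of `x` is the required `z`.
Conversely, given `z`, the element `t = z^a σ^{kb}` lies in `X σ`, hence is `X`-conjugate to `σ`,
and it commutes with `z^k σ^{-ek}`.
-/

open QuotientGroup

theorem QuotientGroup.mk_eq_mk_iff_exists_mem_mul {G : Type*} [Group G] {N : Subgroup G}
    [N.Normal] {g h : G} : (g : G ⧸ N) = h ↔ ∃ v ∈ N, g = v * h := by
  rw [eq_iff_div_mem]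
  exact ⟨fun hgh => ⟨_, hgh, (div_mul_cancel g h).symm⟩, by rintro ⟨v, hv, rfl⟩; simpa using hv⟩

section CommutingPair

variable {G : Type*} [Group G] {w σ : G} {a b : ℤ} {e k : ℕ}

theorem Commute.zpow_mul_pow_pow_mul_inv_pow_eq (h : Commute w σ)
    (hab : (e : ℤ) * a + k * b = 1) :
    (w ^ b * σ ^ e) ^ k * ((w ^ (-a) * σ ^ k) ^ e)⁻¹ = w := by
  rw [((h.zpow_left b).pow_right e).mul_pow, ((h.zpow_left (-a)).pow_right k).mul_pow,
    ← pow_mul, ← pow_mul, mul_comm k e]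
  calc _ = (w ^ b) ^ k * ((w ^ (-a)) ^ e)⁻¹ := by group
    _ = w ^ ((e : ℤ) * a + k * b) := by group
    _ = w := by rw [hab, zpow_one]

theorem Commute.zpow_mul_pow_zpow_mul_pow (h : Commute w σ) (m n : ℤ) (i j : ℕ) :
    Commute (w ^ m * σ ^ i) (w ^ n * σ ^ j) :=
  (((Commute.refl w).zpow_zpow m n).mul_left ((h.symm.zpow_right n).pow_left i)).mul_right
    (((h.zpow_left m).pow_right j).mul_left ((Commute.refl σ).pow_pow i j))

end CommutingPair

section Lang

variable {L : Type*} [Group L] {X : Subgroup L} [X.Normal] {σ : L} {a b : ℤ} {e k : ℕ}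

theorem exists_conj_eq_coset_pow_of_commute
    (hLang : ∀ x ∈ X, ∃ u ∈ X, u⁻¹ * (x * σ ^ k) * u = σ ^ k)
    (hab : (e : ℤ) * a + k * b = 1) {w : L} (hw : w ∈ X) (hwσ : Commute w σ) :
    ∃ z : L, (∃ v ∈ X, z = v * σ ^ e) ∧ z * σ ^ k = σ ^ k * z ∧
      ∃ u ∈ X, u⁻¹ * w * u = z ^ k * (σ ^ (e * k))⁻¹ := by
  obtain ⟨u, hu, hus⟩ := hLang _ (X.zpow_mem hw (-a))
  have hconj : ∀ g, MulAut.conj u⁻¹ g = u⁻¹ * g * u := by simp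
  refine ⟨MulAut.conj u⁻¹ (w ^ b * σ ^ e), ?_, ?_, u, hu, ?_⟩
  · rw [← mk_eq_mk_iff_exists_mem_mul, hconj]
    simp [(eq_one_iff _).2 hu, (eq_one_iff _).2 hw]
  · have := (hwσ.zpow_mul_pow_zpow_mul_pow b (-a) e k).map (MulAut.conj u⁻¹)
    rw [hconj (_ * σ ^ k), hus] at this
    exact this.eq
  · rw [mul_comm e k, pow_mul, ← hus, ← hconj, ← hconj, ← map_pow, ← map_pow, ← map_inv,
      ← map_mul, hwσ.zpow_mul_pow_pow_mul_inv_pow_eq hab]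

theorem exists_conj_commute_of_coset_pow
    (hLang : ∀ x ∈ X, ∃ u ∈ X, u⁻¹ * (x * σ) * u = σ)
    (hab : (e : ℤ) * a + k * b = 1) {z : L} (hz : ∃ v ∈ X, z = v * σ ^ e)
    (hzσ : Commute z (σ ^ k)) :
    ∃ u ∈ X, Commute (u⁻¹ * (z ^ k * (σ ^ (e * k))⁻¹) * u) σ := by
  have hz' : (z : L ⧸ X) = σ ^ e := by rw [← mk_pow, mk_eq_mk_iff_exists_mem_mul]; exact hz
  have ht : ((z ^ a * (σ ^ k) ^ b : L) : L ⧸ X) = σ := by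
    rw [mk_mul, mk_zpow, mk_zpow, hz', mk_pow, ← zpow_natCast, ← zpow_natCast, ← zpow_mul,
      ← zpow_mul, ← zpow_add, hab, zpow_one]
  obtain ⟨x, hx, htx⟩ := mk_eq_mk_iff_exists_mem_mul.1 ht
  obtain ⟨u, hu, hut⟩ := hLang x hx
  refine ⟨u, hu, ?_⟩
  rw [mul_comm e k, pow_mul]
  have hz_comm : Commute z (z ^ k * ((σ ^ k) ^ e)⁻¹) :=
    ((Commute.refl z).pow_right k).mul_right (hzσ.pow_right e).inv_right
  have hs_comm : Commute (σ ^ k) (z ^ k * ((σ ^ k) ^ e)⁻¹) :=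
    (hzσ.symm.pow_right k).mul_right ((Commute.refl _).pow_right e).inv_right
  have hcomm := ((hz_comm.zpow_left a).mul_left (hs_comm.zpow_left b)).symm
  simpa only [htx, inv_inv, hut] using hcomm.conj u⁻¹

end Lang

theorem shintani_subfield_power_general (L : Type) [Group L] (X : Subgroup L) [X.Normal]
    (σ : L)
    (hLang : ∀ j : ℕ, 1 ≤ j → ∀ x ∈ X, ∃ u ∈ X, u⁻¹ * (x * σ ^ j) * u = σ ^ j)
    (e k : ℕ) (hk : 1 ≤ k) (hek : Nat.Coprime e k)
    (y : L) (hy : y ∈ X) :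
    (∃ c ∈ X, (c⁻¹ * y * c) * σ = σ * (c⁻¹ * y * c)) ↔
    (∃ z : L, (∃ v ∈ X, z = v * σ ^ e) ∧ z * σ ^ k = σ ^ k * z ∧
        ∃ c ∈ X, c⁻¹ * y * c = z ^ k * (σ ^ (e * k))⁻¹) := by
  obtain ⟨a, b, hab⟩ : ∃ a b : ℤ, (e : ℤ) * a + k * b = 1 :=
    ⟨_, _, by rw [← Nat.gcd_eq_gcd_ab, hek.gcd_eq_one, Nat.cast_one]⟩
  constructor
  · rintro ⟨c, hc, hcσ⟩
    obtain ⟨z, hz, hzσ, u, hu, huz⟩ := exists_conj_eq_coset_pow_of_commute (hLang k hk) hab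
      (‹X.Normal›.conj_mem' y hy c) hcσ
    exact ⟨z, hz, hzσ, c * u, X.mul_mem hc hu, by rw [← huz]; group⟩
  · rintro ⟨z, hz, hzσ, c, hc, hcz⟩
    obtain ⟨u, hu, hcomm⟩ := exists_conj_commute_of_coset_pow
      (by simpa using hLang 1 le_rfl) hab hz hzσ
    rw [← hcz] at hcomm
    exact ⟨c * u, X.mul_mem hc hu, by simpa [mul_assoc] using hcomm.eq⟩

/-- Abstract form of Lemma 2.7: for coprime `e, k ≥ 1` and `y ∈ X` commuting with
`σ^k`, the element `y` is `X`-conjugate to an element of `X_σ` if and only if `y` is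
`X`-conjugate to the `k`-th power `z^k σ^{-ek}` (computed in the abstract extension)
of an element `z` of the coset `X·σ^e` commuting with `σ^k`. -/
theorem shintani_subfield_power (L : Type) [Group L] (X : Subgroup L) [X.Normal]
    (hfin : ∀ x ∈ X, IsOfFinOrder x) (σ : L)
    (hLang : ∀ j : ℕ, 1 ≤ j → ∀ x ∈ X, ∃ u ∈ X, u⁻¹ * (x * σ ^ j) * u = σ ^ j)
    (e k : ℕ) (he : 1 ≤ e) (hk : 1 ≤ k) (hek : Nat.Coprime e k)
    (y : L) (hy : y ∈ X) (hyk : σ ^ k * y = y * σ ^ k) :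
    (∃ c ∈ X, (c⁻¹ * y * c) * σ = σ * (c⁻¹ * y * c)) ↔
    (∃ z : L, (∃ v ∈ X, z = v * σ ^ e) ∧ z * σ ^ k = σ ^ k * z ∧
        ∃ c ∈ X, c⁻¹ * y * c = z ^ k * (σ ^ (e * k))⁻¹) :=
  shintani_subfield_power_general L X σ hLang e k hk hek y hy
end

section
/- Let L be a group, let X be a normal subgroup of L, and let σ ∈ L; assume that for every integer j ≥ 1, every element of the coset X·σ^j is conjugate to σ^j by an element of X (the Lang property). Let l, m be positive integers with l dividing m, and let k be a prime divisor of m with k dividing m/l. Let a ∈ X, set g = a σ^l a⁻¹ and h = a⁻¹ σ^m a, assume g σ^m = σ^m g, and set w = a⁻¹ σ^m a σ^{-m} (so that w ∈ X_{σ^l}). Then there exists c ∈ X with c σ^m = σ^m c such that c⁻¹ g c ∈ X_{σ^{m/k}}·σ^l if and only if there exists z ∈ X_{σ^l} with w = z^k. -/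
/-!
In Mathlib's convention `⁅g, h⁆ = g * h * g⁻¹ * h⁻¹` the Shintani image of `a` is
`w = ⁅a⁻¹, σ ^ m⁆`. Put `τ = σ ^ l`, `ρ = σ ^ (m / k)` (a power of `τ`) and `μ = ρ ^ k = σ ^ m`.

If `c⁻¹ g c = y τ` with `y ∈ X_ρ`, the Lang property writes `y = ⁅u, τ⁆`, so `s = ⁅u⁻¹, ρ⁆`
centralizes `τ` and `⁅u⁻¹, μ⁆ = s ^ k`; as `d = a⁻¹ c u` centralizes `τ`, hence `μ`, we get
`w = d s ^ k d⁻¹ = (d s d⁻¹) ^ k`. Conversely, if `w = z ^ k` with `z ∈ X_τ`, the Lang property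
writes `z = ⁅v, ρ⁆`, so `⁅v, μ⁆ = z ^ k = w`, i.e. `c = a v` centralizes `μ`, and
`c⁻¹ g c = ⁅v⁻¹, τ⁆ τ` with `⁅v⁻¹, τ⁆` centralizing `ρ`.
-/

open scoped commutatorElement

section

variable {G : Type*} [Group G]

theorem commute_mul_left_iff_of_commute {a b c : G} (hb : Commute b c) :
    Commute (a * b) c ↔ Commute a c :=
  ⟨fun h => by simpa using h.mul_left hb.inv_left, fun h => h.mul_left hb⟩

theorem commute_commutatorElement_iff {u τ ρ : G} (h : Commute τ ρ) :
    Commute ⁅u, τ⁆ ρ ↔ Commute τ ⁅u⁻¹, ρ⁆ :=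
  calc Commute ⁅u, τ⁆ ρ ↔ Commute (u * τ * u⁻¹) ρ := commute_mul_left_iff_of_commute h.inv_left
    _ ↔ Commute τ (u⁻¹ * ρ * u) := by
      rw [← Commute.conj_iff u⁻¹, inv_inv]; group
    _ ↔ Commute τ ⁅u⁻¹, ρ⁆ := by
      rw [commutatorElement_def, inv_inv, Commute.symm_iff (a := τ) (b := _ * ρ⁻¹),
        commute_mul_left_iff_of_commute h.symm.inv_left, Commute.symm_iff]

theorem commutatorElement_pow_right_of_commute {u ρ : G} (h : Commute ⁅u, ρ⁆ ρ) (k : ℕ) :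
    ⁅u, ρ ^ k⁆ = ⁅u, ρ⁆ ^ k := by
  have hconj : u * ρ * u⁻¹ = ⁅u, ρ⁆ * ρ := by rw [commutatorElement_def]; group
  rw [commutatorElement_def, ← conj_pow, hconj, h.mul_pow, mul_inv_cancel_right]

theorem commutatorElement_mul_mul_of_commute {c d μ : G} (v : G) (hc : Commute c μ)
    (hd : Commute d μ) : ⁅c * v * d, μ⁆ = c * ⁅v, μ⁆ * c⁻¹ := by
  rw [commutatorElement_def, commutatorElement_def]
  calc c * v * d * μ * (c * v * d)⁻¹ * μ⁻¹ = c * v * (d * μ * d⁻¹) * v⁻¹ * (c⁻¹ * μ⁻¹) := by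
        group
    _ = c * (v * μ * v⁻¹ * μ⁻¹) * c⁻¹ := by rw [hd.mul_inv_cancel, hc.inv_inv.eq]; group

theorem commutatorElement_eq_commutatorElement_iff {x y μ : G} :
    ⁅x, μ⁆ = ⁅y, μ⁆ ↔ Commute (y⁻¹ * x) μ := by
  rw [commutatorElement_def, commutatorElement_def, mul_left_inj, mul_inv_eq_iff_eq_mul,
    commute_iff_eq, mul_assoc y⁻¹, inv_mul_eq_iff_eq_mul]
  simp only [mul_assoc]

theorem Subgroup.commutatorElement_mem_of_mem_left {X : Subgroup G} [X.Normal] {u : G}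
    (hu : u ∈ X) (τ : G) : ⁅u, τ⁆ ∈ X :=
  Subgroup.commutator_le_left X ⊤ (Subgroup.commutator_mem_commutator hu (Subgroup.mem_top τ))

/-- Every element `x * τ` of the coset `X * τ` is `X`-conjugate to `τ`: `u * τ * u⁻¹ = x * τ`. -/
def Subgroup.IsLangElement (X : Subgroup G) (τ : G) : Prop :=
  ∀ x ∈ X, ∃ u ∈ X, ⁅u, τ⁆ = x

theorem Subgroup.isLangElement_of_forall_conj {X : Subgroup G} {τ : G}
    (h : ∀ x ∈ X, ∃ u ∈ X, u⁻¹ * (x * τ) * u = τ) : X.IsLangElement τ := by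
  intro x hx
  obtain ⟨u, hu, hux⟩ := h x hx
  have hconj : u * τ * u⁻¹ = x * τ := by
    conv_lhs => rw [← hux]
    group
  exact ⟨u, hu, by rw [commutatorElement_def, hconj, mul_inv_cancel_right]⟩

variable {X : Subgroup G} [X.Normal] {τ a : G} (t k : ℕ)

theorem exists_commute_commutatorElement_eq_pow_of_conj {c y : G} (hτ : X.IsLangElement τ)
    (hcμ : Commute c ((τ ^ t) ^ k)) (hy : y ∈ X)
    (hyρ : Commute y (τ ^ t)) (hconj : c⁻¹ * (a * τ * a⁻¹) * c = y * τ) :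
    ∃ z ∈ X, Commute z τ ∧ ⁅a⁻¹, (τ ^ t) ^ k⁆ = z ^ k := by
  obtain ⟨u, hu, rfl⟩ := hτ y hy
  set s := ⁅u⁻¹, τ ^ t⁆
  have hτs : Commute τ s := (commute_commutatorElement_iff (Commute.self_pow τ t)).1 hyρ
  have hsμ : ⁅u⁻¹, (τ ^ t) ^ k⁆ = s ^ k :=
    commutatorElement_pow_right_of_commute (hτs.symm.pow_right t) k
  have hcuτ : ⁅c * u, τ⁆ = ⁅a, τ⁆ :=
    calc ⁅c * u, τ⁆ = c * (⁅u, τ⁆ * τ) * c⁻¹ * τ⁻¹ := by simp only [commutatorElement_def]; group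
      _ = ⁅a, τ⁆ := by rw [← hconj, commutatorElement_def]; group
  set d := a⁻¹ * (c * u)
  have hdτ : Commute d τ := commutatorElement_eq_commutatorElement_iff.1 hcuτ
  have had : a⁻¹ = d * u⁻¹ * c⁻¹ := by simp only [d]; group
  refine ⟨d * s * d⁻¹, Subgroup.Normal.conj_mem ‹_› s
    (Subgroup.commutatorElement_mem_of_mem_left (inv_mem hu) _) d, ?_, ?_⟩
  · exact ((hdτ.symm.mul_right hτs).mul_right hdτ.symm.inv_right).symm
  · rw [had, commutatorElement_mul_mul_of_commute _ ((hdτ.pow_right t).pow_right k) hcμ.inv_left,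
      hsμ, conj_pow]

theorem exists_conj_of_commutatorElement_eq_pow {z : G} (hρ : X.IsLangElement (τ ^ t))
    (ha : a ∈ X) (hz : z ∈ X) (hzτ : Commute z τ) (hw : ⁅a⁻¹, (τ ^ t) ^ k⁆ = z ^ k) :
    ∃ c ∈ X, Commute c ((τ ^ t) ^ k) ∧
      ∃ y ∈ X, Commute y (τ ^ t) ∧ c⁻¹ * (a * τ * a⁻¹) * c = y * τ := by
  obtain ⟨v, hv, rfl⟩ := hρ z hz
  have hvμ : ⁅v, (τ ^ t) ^ k⁆ = ⁅a⁻¹, (τ ^ t) ^ k⁆ := by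
    rw [hw, commutatorElement_pow_right_of_commute (hzτ.pow_right t) k]
  refine ⟨a * v, mul_mem ha hv, ?_, ⁅v⁻¹, τ⁆,
    Subgroup.commutatorElement_mem_of_mem_left (inv_mem hv) τ, ?_, ?_⟩
  · simpa only [inv_inv] using commutatorElement_eq_commutatorElement_iff.1 hvμ
  · rw [commute_commutatorElement_iff (Commute.self_pow τ t), inv_inv]
    exact hzτ.symm
  · rw [commutatorElement_def]
    group

theorem exists_conj_eq_mul_iff_commutatorElement_eq_pow (hτ : X.IsLangElement τ)
    (hρ : X.IsLangElement (τ ^ t)) (ha : a ∈ X) :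
    (∃ c ∈ X, Commute c ((τ ^ t) ^ k) ∧
      ∃ y ∈ X, Commute y (τ ^ t) ∧ c⁻¹ * (a * τ * a⁻¹) * c = y * τ) ↔
    ∃ z ∈ X, Commute z τ ∧ ⁅a⁻¹, (τ ^ t) ^ k⁆ = z ^ k :=
  ⟨fun ⟨_, _, hcμ, _, hy, hyρ, hconj⟩ =>
      exists_commute_commutatorElement_eq_pow_of_conj t k hτ hcμ hy hyρ hconj,
    fun ⟨_, hz, hzτ, hw⟩ => exists_conj_of_commutatorElement_eq_pow t k hρ ha hz hzτ hw⟩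

end

theorem shintani_subfields_dividing_general (L : Type) [Group L] (X : Subgroup L) [X.Normal]
    (σ : L)
    (hLang : ∀ j : ℕ, 1 ≤ j → ∀ x ∈ X, ∃ u ∈ X, u⁻¹ * (x * σ ^ j) * u = σ ^ j)
    (l m : ℕ) (hl : 0 < l) (hm : 0 < m) (hlm : l ∣ m)
    (k : ℕ) (hk : k.Prime) (hkm : k ∣ m) (hkml : k ∣ m / l)
    (a : L) (ha : a ∈ X) :
    (∃ c ∈ X, c * σ ^ m = σ ^ m * c ∧
        ∃ y ∈ X, y * σ ^ (m / k) = σ ^ (m / k) * y ∧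
          c⁻¹ * (a * σ ^ l * a⁻¹) * c = y * σ ^ l) ↔
    (∃ z ∈ X, z * σ ^ l = σ ^ l * z ∧
        a⁻¹ * σ ^ m * a * (σ ^ m)⁻¹ = z ^ k) := by
  have hlmk : l ∣ m / k := Nat.dvd_div_of_mul_dvd (mul_comm l k ▸ Nat.mul_dvd_of_dvd_div hlm hkml)
  have hρ : (σ ^ l) ^ (m / k / l) = σ ^ (m / k) := by rw [← pow_mul, Nat.mul_div_cancel' hlmk]
  have hμ : (σ ^ (m / k)) ^ k = σ ^ m := by rw [← pow_mul, Nat.div_mul_cancel hkm]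
  have hmk : 1 ≤ m / k := Nat.div_pos (Nat.le_of_dvd hm hkm) hk.pos
  have key := exists_conj_eq_mul_iff_commutatorElement_eq_pow (m / k / l) k
    (X.isLangElement_of_forall_conj (hLang l hl))
    (hρ ▸ X.isLangElement_of_forall_conj (hLang (m / k) hmk)) ha
  rw [hρ, hμ, commutatorElement_def, inv_inv] at key
  exact key

/-- Abstract form of Corollary 2.8(i): when the prime `k` divides `m/l`, the element
`g = a σ^l a⁻¹` lies in an `X_{σ^m}`-conjugate of `X_{σ^{m/k}}·σ^l` if and only if its
Shintani image `w = a⁻¹ σ^m a σ^{-m} ∈ X_{σ^l}` is a `k`-th power in `X_{σ^l}`. -/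
theorem shintani_subfields_dividing (L : Type) [Group L] (X : Subgroup L) [X.Normal]
    (σ : L)
    (hLang : ∀ j : ℕ, 1 ≤ j → ∀ x ∈ X, ∃ u ∈ X, u⁻¹ * (x * σ ^ j) * u = σ ^ j)
    (l m : ℕ) (hl : 0 < l) (hm : 0 < m) (hlm : l ∣ m)
    (k : ℕ) (hk : k.Prime) (hkm : k ∣ m) (hkml : k ∣ m / l)
    (a : L) (ha : a ∈ X)
    (hg : (a * σ ^ l * a⁻¹) * σ ^ m = σ ^ m * (a * σ ^ l * a⁻¹)) :
    (∃ c ∈ X, c * σ ^ m = σ ^ m * c ∧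
        ∃ y ∈ X, y * σ ^ (m / k) = σ ^ (m / k) * y ∧
          c⁻¹ * (a * σ ^ l * a⁻¹) * c = y * σ ^ l) ↔
    (∃ z ∈ X, z * σ ^ l = σ ^ l * z ∧
        a⁻¹ * σ ^ m * a * (σ ^ m)⁻¹ = z ^ k) :=
  shintani_subfields_dividing_general L X σ hLang l m hl hm hlm k hk hkm hkml a ha
end

section
/- Let L be a group, let X be a normal subgroup of L all of whose elements have finite order, and let σ ∈ L; assume that for every integer j ≥ 1, every element of the coset X·σ^j is conjugate to σ^j by an element of X (the Lang property). Let l, m be positive integers with l dividing m, and let k be a prime divisor of m that does not divide m/l (so k divides l). Let a ∈ X, set g = a σ^l a⁻¹ and h = a⁻¹ σ^m a, assume g σ^m = σ^m g, and set w = a⁻¹ σ^m a σ^{-m} (so that w ∈ X_{σ^l}). Assume in addition that every X-conjugate of w that lies in X_{σ^l} is conjugate to w by an element of X_{σ^l}. Then there exists c ∈ X with c σ^m = σ^m c such that c⁻¹ g c ∈ X_{σ^{m/k}}·σ^l if and only if there exists d ∈ X with d σ^l = σ^l d such that d⁻¹ w d ∈ X_{σ^{l/k}}. -/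
/-!
Put `τ = σ ^ (l / k)` and `n = m / l`, so that `σ ^ l = τ ^ k`, `σ ^ m = τ ^ (k * n)`,
`σ ^ (m / k) = τ ^ n`, and `k` is prime to `n`. Since the `X`-conjugates of a power of `σ` fill
its coset, the left side says that some `t ∈ X τ ^ n` commuting with `τ ^ k` has
`t ^ k = w τ ^ (k * n)`, and, by stability, the right side says that `w` commutes with some
`s ∈ X τ`. With `A k + B n = 1`, `s = t ^ B τ ^ (k * A)` goes from the first to the second.
Conversely, if `w` commutes with `τ`, an element of `X` conjugating `w ^ (-B) τ ^ k` to `τ ^ k`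
carries `w ^ A τ ^ n` to a `k`-th root of `w' τ ^ (k * n)` for an `X`-conjugate `w'` of `w`
commuting with `τ ^ k`, and stability replaces `w'` by `w`.
-/

theorem Commute.zpow_mul_pow_pow {G : Type*} [Group G] {a b : G} (h : Commute a b) {A B : ℤ}
    {k n : ℕ} (hAB : A * k + B * n = 1) :
    (a ^ A * b ^ n) ^ k = a * (a ^ (-B) * b ^ k) ^ n := by
  rw [((h.zpow_left A).pow_right n).mul_pow, ((h.zpow_left (-B)).pow_right k).mul_pow,
    ← pow_mul, ← pow_mul, mul_comm n k, ← zpow_natCast (a ^ A), ← zpow_natCast (a ^ (-B)),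
    ← zpow_mul, ← zpow_mul, ← mul_assoc, ← zpow_one_add]
  congr 2
  linear_combination hAB

def LangProperty {L : Type*} [Group L] (X : Subgroup L) (τ : L) : Prop :=
  ∀ x ∈ X, ∃ u ∈ X, u⁻¹ * (x * τ) * u = τ

section

variable {L : Type*} [Group L] {X : Subgroup L} [X.Normal]

theorem LangProperty.exists_conj_eq {τ s : L} (hτ : LangProperty X τ)
    (hs : (s : L ⧸ X) = τ) : ∃ u ∈ X, u * τ * u⁻¹ = s := by
  have hsτ : s * τ⁻¹ ∈ X := by
    rw [← QuotientGroup.eq_one_iff, QuotientGroup.mk_mul, QuotientGroup.mk_inv, hs,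
      mul_inv_cancel]
  obtain ⟨u, hu, hconj⟩ := hτ _ hsτ
  refine ⟨u, hu, ?_⟩
  rw [← hconj]
  group

theorem exists_coset_commute_of_root {τ t w : L} {k n : ℕ} (hkn : k.Coprime n)
    (ht : (t : L ⧸ X) = ↑(τ ^ n)) (htk : t ^ k = w * τ ^ (k * n)) (hτt : Commute (τ ^ k) t) :
    ∃ s : L, (s : L ⧸ X) = τ ∧ Commute w s := by
  obtain ⟨A, B, hAB⟩ := Nat.isCoprime_iff_coprime.mpr hkn
  have hw : w = t ^ k * ((τ ^ k) ^ n)⁻¹ := by rw [← pow_mul, htk, mul_inv_cancel_right]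
  have hwt : Commute w t := by
    rw [hw]
    exact ((Commute.refl t).pow_left k).mul_left (hτt.pow_left n).inv_left
  have hwτ : Commute w (τ ^ k) := by
    rw [hw]
    exact (hτt.symm.pow_left k).mul_left ((Commute.refl _).pow_left n).inv_left
  refine ⟨t ^ B * (τ ^ k) ^ A, ?_, (hwt.zpow_right B).mul_right (hwτ.zpow_right A)⟩
  simp only [QuotientGroup.mk_mul, QuotientGroup.mk_zpow, ht, QuotientGroup.mk_pow]
  rw [← zpow_natCast, ← zpow_natCast, ← zpow_mul, ← zpow_mul, ← zpow_add,
    show (n : ℤ) * B + k * A = 1 by linear_combination hAB, zpow_one]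

theorem exists_conj_root_of_commute {τ w : L} {k n : ℕ} (hkn : k.Coprime n)
    (hτk : LangProperty X (τ ^ k)) (hw : w ∈ X) (hwτ : Commute w τ) :
    ∃ y ∈ X, Commute (y⁻¹ * w * y) (τ ^ k) ∧
      ∃ t : L, (t : L ⧸ X) = ↑(τ ^ n) ∧ t ^ k = y⁻¹ * w * y * τ ^ (k * n) ∧
        Commute (τ ^ k) t := by
  obtain ⟨A, B, hAB⟩ := Nat.isCoprime_iff_coprime.mpr hkn
  have hw1 : (w : L ⧸ X) = 1 := (QuotientGroup.eq_one_iff w).mpr hw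
  obtain ⟨y, hy, hβ⟩ := hτk.exists_conj_eq (s := w ^ (-B) * τ ^ k) (by simp [hw1])
  have hy1 : (y : L ⧸ X) = 1 := (QuotientGroup.eq_one_iff y).mpr hy
  have hwβ : Commute w (w ^ (-B) * τ ^ k) :=
    ((Commute.refl w).zpow_right _).mul_right (hwτ.pow_right k)
  have hβ' : Commute (w ^ (-B) * τ ^ k) (w ^ A * τ ^ n) :=
    (((Commute.refl w).zpow_zpow _ _).mul_right ((hwτ.zpow_left _).pow_right _)).mul_left
      (((hwτ.zpow_left A).pow_right k).symm.mul_right (Commute.pow_pow_self τ k n))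
  have hconj : y⁻¹ * (w ^ (-B) * τ ^ k) * y = τ ^ k := by rw [← hβ]; group
  refine ⟨y, hy, ?_, y⁻¹ * (w ^ A * τ ^ n) * y, by simp [hy1, hw1], ?_, ?_⟩
  · rw [← hconj]
    simpa only [inv_inv] using hwβ.conj y⁻¹
  · have hpow (b : L) (i : ℕ) : (y⁻¹ * b * y) ^ i = y⁻¹ * b ^ i * y := by
      simpa only [inv_inv] using conj_pow (a := y⁻¹) (b := b) (i := i)
    rw [hpow, hwτ.zpow_mul_pow_pow hAB]
    conv_rhs => rw [pow_mul, ← hconj, hpow]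
    group
  · rw [← hconj]
    simpa only [inv_inv] using hβ'.conj y⁻¹

theorem exists_conj_subfield_iff_exists_root {τ a w : L} {k n : ℕ}
    (hτn : LangProperty X (τ ^ n)) (ha : a ∈ X)
    (hw : w = a⁻¹ * τ ^ (k * n) * a * (τ ^ (k * n))⁻¹) :
    (∃ c ∈ X, Commute c (τ ^ (k * n)) ∧
        ∃ y ∈ X, Commute y (τ ^ n) ∧ c⁻¹ * (a * τ ^ k * a⁻¹) * c = y * τ ^ k) ↔
      ∃ t : L, (t : L ⧸ X) = ↑(τ ^ n) ∧ t ^ k = w * τ ^ (k * n) ∧ Commute (τ ^ k) t := by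
  have ha1 : (a : L ⧸ X) = 1 := (QuotientGroup.eq_one_iff a).mpr ha
  constructor
  · rintro ⟨c, hc, hcτ, y, -, hyτ, hcg⟩
    have hc1 : (c : L ⧸ X) = 1 := (QuotientGroup.eq_one_iff c).mpr hc
    refine ⟨(a⁻¹ * c) * τ ^ n * (a⁻¹ * c)⁻¹, by simp [ha1, hc1], ?_, ?_⟩
    · rw [conj_pow, ← pow_mul, mul_comm n k, hw]
      calc a⁻¹ * c * τ ^ (k * n) * (a⁻¹ * c)⁻¹ = a⁻¹ * (c * τ ^ (k * n)) * c⁻¹ * a := by group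
        _ = a⁻¹ * τ ^ (k * n) * a * (τ ^ (k * n))⁻¹ * τ ^ (k * n) := by rw [hcτ.eq]; group
    · have h := (hyτ.mul_left (Commute.pow_pow_self τ k n)).conj (a⁻¹ * c)
      rw [← hcg] at h
      convert h using 1
      group
  · rintro ⟨t, ht, htk, hτt⟩
    obtain ⟨u, hu, rfl⟩ := hτn.exists_conj_eq ht
    have hu1 : (u : L ⧸ X) = 1 := (QuotientGroup.eq_one_iff u).mpr hu
    have hu' : u * τ ^ (k * n) * u⁻¹ = a⁻¹ * τ ^ (k * n) * a := by
      rw [pow_mul', ← conj_pow, htk, hw, inv_mul_cancel_right, pow_mul']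
    refine ⟨a * u, X.mul_mem ha hu, ?_, u⁻¹ * τ ^ k * u * (τ ^ k)⁻¹,
      (QuotientGroup.eq_one_iff _).mp (by simp [hu1]), ?_, by group⟩
    · calc a * u * τ ^ (k * n) = a * (u * τ ^ (k * n) * u⁻¹) * u := by group
        _ = τ ^ (k * n) * (a * u) := by rw [hu']; group
    · have h := hτt.conj u⁻¹
      simp only [inv_inv, mul_assoc, inv_mul_cancel, mul_one, inv_mul_cancel_left] at h
      simpa only [mul_assoc] using h.mul_left (Commute.pow_pow_self τ k n).inv_left

theorem shintani_subfield_iff {τ a w : L} {k n : ℕ} (hkn : k.Coprime n)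
    (hτ : LangProperty X τ) (hτk : LangProperty X (τ ^ k)) (hτn : LangProperty X (τ ^ n))
    (ha : a ∈ X) (hw : w = a⁻¹ * τ ^ (k * n) * a * (τ ^ (k * n))⁻¹)
    (hstable : ∀ c ∈ X, Commute (c⁻¹ * w * c) (τ ^ k) →
      ∃ d ∈ X, Commute d (τ ^ k) ∧ d⁻¹ * w * d = c⁻¹ * w * c) :
    (∃ c ∈ X, Commute c (τ ^ (k * n)) ∧
        ∃ y ∈ X, Commute y (τ ^ n) ∧ c⁻¹ * (a * τ ^ k * a⁻¹) * c = y * τ ^ k) ↔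
      ∃ d ∈ X, Commute d (τ ^ k) ∧ Commute (d⁻¹ * w * d) τ := by
  have ha1 : (a : L ⧸ X) = 1 := (QuotientGroup.eq_one_iff a).mpr ha
  have hwX : w ∈ X := (QuotientGroup.eq_one_iff w).mp (by simp [hw, ha1])
  rw [exists_conj_subfield_iff_exists_root hτn ha hw]
  constructor
  · rintro ⟨t, ht, htk, hτt⟩
    obtain ⟨s, hs, hws⟩ := exists_coset_commute_of_root hkn ht htk hτt
    obtain ⟨u, hu, rfl⟩ := hτ.exists_conj_eq hs
    have hwu : Commute (u⁻¹ * w * u) τ := by simpa [mul_assoc] using hws.conj u⁻¹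
    obtain ⟨d, hd, hdτ, hdw⟩ := hstable u hu (hwu.pow_right k)
    exact ⟨d, hd, hdτ, hdw ▸ hwu⟩
  · rintro ⟨d, hd, -, hwτ⟩
    obtain ⟨y, hy, hyw, t, ht, htk, hτt⟩ := exists_conj_root_of_commute (n := n) hkn hτk
      (X.mul_mem (X.mul_mem (X.inv_mem hd) hwX) hd) hwτ
    obtain ⟨e, he, heτ, hew⟩ :=
      hstable (d * y) (X.mul_mem hd hy) (by simpa only [mul_inv_rev, mul_assoc] using hyw)
    have he1 : (e : L ⧸ X) = 1 := (QuotientGroup.eq_one_iff e).mpr he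
    have heτ' : e * τ ^ k * e⁻¹ = τ ^ k := by rw [heτ.eq, mul_inv_cancel_right]
    refine ⟨e * t * e⁻¹, by simp [ht, he1], ?_, ?_⟩
    · have hew' : y⁻¹ * (d⁻¹ * w * d) * y = e⁻¹ * w * e := by rw [hew]; group
      have heτn : Commute e (τ ^ (k * n)) := by rw [pow_mul]; exact heτ.pow_right n
      rw [conj_pow, htk, hew']
      calc e * (e⁻¹ * w * e * τ ^ (k * n)) * e⁻¹ = w * (e * τ ^ (k * n) * e⁻¹) := by group
        _ = w * τ ^ (k * n) := by rw [heτn.eq, mul_inv_cancel_right]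
    · simpa only [heτ'] using hτt.conj e

end

theorem shintani_subfields_nondividing_general (L : Type) [Group L] (X : Subgroup L) [X.Normal]
    (σ : L)
    (hLang : ∀ j : ℕ, 1 ≤ j → ∀ x ∈ X, ∃ u ∈ X, u⁻¹ * (x * σ ^ j) * u = σ ^ j)
    (l m : ℕ) (hlm : l ∣ m)
    (k : ℕ) (hk : k.Prime) (hkm : k ∣ m) (hkml : ¬ k ∣ m / l)
    (a : L) (ha : a ∈ X)
    (hstable : ∀ c ∈ X,
      (c⁻¹ * (a⁻¹ * σ ^ m * a * (σ ^ m)⁻¹) * c) * σ ^ l =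
          σ ^ l * (c⁻¹ * (a⁻¹ * σ ^ m * a * (σ ^ m)⁻¹) * c) →
        ∃ d ∈ X, d * σ ^ l = σ ^ l * d ∧
          d⁻¹ * (a⁻¹ * σ ^ m * a * (σ ^ m)⁻¹) * d =
            c⁻¹ * (a⁻¹ * σ ^ m * a * (σ ^ m)⁻¹) * c) :
    (∃ c ∈ X, c * σ ^ m = σ ^ m * c ∧
        ∃ y ∈ X, y * σ ^ (m / k) = σ ^ (m / k) * y ∧
          c⁻¹ * (a * σ ^ l * a⁻¹) * c = y * σ ^ l) ↔
    (∃ d ∈ X, d * σ ^ l = σ ^ l * d ∧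
        (d⁻¹ * (a⁻¹ * σ ^ m * a * (σ ^ m)⁻¹) * d) * σ ^ (l / k) =
          σ ^ (l / k) * (d⁻¹ * (a⁻¹ * σ ^ m * a * (σ ^ m)⁻¹) * d)) := by
  obtain ⟨n, rfl⟩ := hlm
  have hl : 0 < l := Nat.pos_of_ne_zero (by rintro rfl; simp at hkml)
  rw [Nat.mul_div_cancel_left n hl] at hkml
  have hn : 0 < n := Nat.pos_of_ne_zero (by rintro rfl; simp at hkml)
  obtain ⟨p, rfl⟩ : k ∣ l := (hk.dvd_mul.mp hkm).resolve_right hkml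
  have hLangPow (j : ℕ) (hj : 0 < j) : LangProperty X ((σ ^ p) ^ j) := by
    rw [← pow_mul]
    exact hLang _ (Nat.mul_pos (Nat.pos_of_mul_pos_left hl) hj)
  have hσl : σ ^ (k * p) = (σ ^ p) ^ k := pow_mul' σ k p
  have hσm : σ ^ (k * p * n) = (σ ^ p) ^ (k * n) := by rw [← pow_mul]; ring_nf
  have hσmk : σ ^ (k * p * n / k) = (σ ^ p) ^ n := by
    rw [mul_assoc, Nat.mul_div_cancel_left _ hk.pos, pow_mul]
  rw [hσm, hσl] at hstable
  rw [hσm, hσmk, hσl, Nat.mul_div_cancel_left _ hk.pos]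
  exact shintani_subfield_iff (hk.coprime_iff_not_dvd.mpr hkml)
    (by simpa using hLangPow 1 one_pos) (hLangPow k hk.pos) (hLangPow n hn) ha rfl hstable

/-- Abstract form of Corollary 2.8(ii): when the prime `k` divides `m` but not `m/l`,
and the `X`-class of the Shintani image `w = a⁻¹ σ^m a σ^{-m}` meets `X_{σ^l}` in a
single `X_{σ^l}`-class, the element `g = a σ^l a⁻¹` lies in an `X_{σ^m}`-conjugate of
`X_{σ^{m/k}}·σ^l` if and only if `w` lies in an `X_{σ^l}`-conjugate of `X_{σ^{l/k}}`. -/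
theorem shintani_subfields_nondividing (L : Type) [Group L] (X : Subgroup L) [X.Normal]
    (hfin : ∀ x ∈ X, IsOfFinOrder x) (σ : L)
    (hLang : ∀ j : ℕ, 1 ≤ j → ∀ x ∈ X, ∃ u ∈ X, u⁻¹ * (x * σ ^ j) * u = σ ^ j)
    (l m : ℕ) (hl : 0 < l) (hm : 0 < m) (hlm : l ∣ m)
    (k : ℕ) (hk : k.Prime) (hkm : k ∣ m) (hkml : ¬ k ∣ m / l)
    (a : L) (ha : a ∈ X)
    (hg : (a * σ ^ l * a⁻¹) * σ ^ m = σ ^ m * (a * σ ^ l * a⁻¹))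
    (hstable : ∀ c ∈ X,
      (c⁻¹ * (a⁻¹ * σ ^ m * a * (σ ^ m)⁻¹) * c) * σ ^ l =
          σ ^ l * (c⁻¹ * (a⁻¹ * σ ^ m * a * (σ ^ m)⁻¹) * c) →
        ∃ d ∈ X, d * σ ^ l = σ ^ l * d ∧
          d⁻¹ * (a⁻¹ * σ ^ m * a * (σ ^ m)⁻¹) * d =
            c⁻¹ * (a⁻¹ * σ ^ m * a * (σ ^ m)⁻¹) * c) :
    (∃ c ∈ X, c * σ ^ m = σ ^ m * c ∧
        ∃ y ∈ X, y * σ ^ (m / k) = σ ^ (m / k) * y ∧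
          c⁻¹ * (a * σ ^ l * a⁻¹) * c = y * σ ^ l) ↔
    (∃ d ∈ X, d * σ ^ l = σ ^ l * d ∧
        (d⁻¹ * (a⁻¹ * σ ^ m * a * (σ ^ m)⁻¹) * d) * σ ^ (l / k) =
          σ ^ (l / k) * (d⁻¹ * (a⁻¹ * σ ^ m * a * (σ ^ m)⁻¹) * d)) :=
  shintani_subfields_nondividing_general L X σ hLang l m hlm k hk hkm hkml a ha hstable
end

section
/- Let G be a finite group, let p be a prime, let w ∈ G be an element whose order is a power of p, and let x ∈ G with G generated by x and w. Let A be the subgroup of G generated by the conjugates x^{w^i} for 0 ≤ i ≤ p − 1 together with w^p. Suppose that A is abelian and that w ∉ A. Then A is a maximal subgroup of G containing x, and A is the unique maximal subgroup of G containing x. -/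
/-!
Let `B` be the subgroup generated by all conjugates `x^{w^k}`, `k ∈ ℤ`. Since `w^p` commutes with
`x`, these are already the `x^{w^i}` with `0 ≤ i < p`, so `A = ⟨w^p⟩ B`. `B` is normalised by `w`
and centralised by `x ∈ B`, hence normal, and `G = B⟨w⟩`. Let `M` be a proper subgroup containing
`x` and `g = b w^k ∈ M` with `b ∈ B`. If `p ∣ k` then `g ∈ A`. Otherwise, since `B` is abelian,
conjugation by `g^j` sends `x` to `x^{w^{kj}}`, and `kj` runs through all residues mod `p`; so
`B ≤ M`, hence `w^k ∈ M`, and as `w` is a `p`-element, `w ∈ M` and `M = G`. Thus every proper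
subgroup containing `x` lies in `A`, which is proper because `w ∉ A`.
-/

open Subgroup

theorem isCoatom_of_forall_ne_top_le {α : Type*} [PartialOrder α] [OrderTop α] {a c : α}
    (ha : a ≠ ⊤) (hca : c ≤ a) (h : ∀ b, c ≤ b → b ≠ ⊤ → b ≤ a) : IsCoatom a :=
  ⟨ha, fun b hab => by_contra fun hb => hab.not_ge (h b (hca.trans hab.le) hb)⟩

theorem Int.exists_natCast_mul_emod_eq {p : ℕ} (hp : p.Prime) {k : ℤ} (hk : ¬(p : ℤ) ∣ k)
    (i : ℤ) : ∃ j : ℕ, k * j % p = i % p := by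
  have := Fact.mk hp
  have hk' : (k : ZMod p) ≠ 0 := by rwa [Ne, ZMod.intCast_zmod_eq_zero_iff_dvd]
  refine ⟨((k : ZMod p)⁻¹ * i).val, ?_⟩
  rw [← ZMod.intCast_eq_intCast_iff']
  push_cast
  rw [ZMod.natCast_zmod_val, ← mul_assoc, mul_inv_cancel₀ hk', one_mul]

section

variable {G : Type*} [Group G]

def zpowConjugates (w x : G) : Set G :=
  Set.range fun k : ℤ => (w ^ k)⁻¹ * x * w ^ k

variable {w x : G}

theorem conj_zpow_emod {p : ℕ} (h : Commute x (w ^ p)) (k : ℤ) :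
    (w ^ k)⁻¹ * x * w ^ k = (w ^ (k % p))⁻¹ * x * w ^ (k % p) := by
  have hk := Int.mul_ediv_add_emod k p
  generalize k / p = q at hk
  generalize k % p = r at hk ⊢
  subst hk
  have hc : Commute (w ^ ((p : ℤ) * q)) x := by
    rw [zpow_mul, zpow_natCast]; exact (h.zpow_right q).symm
  calc (w ^ ((p : ℤ) * q + r))⁻¹ * x * w ^ ((p : ℤ) * q + r)
      = (w ^ r)⁻¹ * ((w ^ ((p : ℤ) * q))⁻¹ * x * w ^ ((p : ℤ) * q)) * w ^ r := by
        rw [zpow_add]; group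
    _ = (w ^ r)⁻¹ * x * w ^ r := by rw [hc.inv_mul_cancel]

theorem zpowConjugates_eq_range_fin {p : ℕ} (hp : 0 < p) (h : Commute x (w ^ p)) :
    zpowConjugates w x = Set.range fun i : Fin p => (w ^ (i : ℕ))⁻¹ * x * w ^ (i : ℕ) := by
  apply subset_antisymm
  · rintro _ ⟨k, rfl⟩
    have h0 : 0 ≤ k % p := Int.emod_nonneg k (by omega)
    have hlt : k % p < p := Int.emod_lt_of_pos k (by omega)
    refine ⟨⟨(k % p).toNat, by omega⟩, ?_⟩
    dsimp only
    rw [conj_zpow_emod h k, ← zpow_natCast, Int.toNat_of_nonneg h0]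
  · rintro _ ⟨i, rfl⟩
    exact ⟨i, by simp only [zpow_natCast]⟩

theorem mem_normalizer_zpowConjugates : w ∈ normalizer (zpowConjugates w x) := by
  refine mem_set_normalizer_iff''.mpr fun h => ⟨?_, ?_⟩
  · rintro ⟨k, rfl⟩
    exact ⟨k + 1, by group⟩
  · rintro ⟨k, hk⟩
    refine ⟨k - 1, ?_⟩
    rw [show h = w * (w⁻¹ * h * w) * w⁻¹ by group, ← hk]
    group

theorem normal_closure_zpowConjugates (hgen : closure {x, w} = ⊤)
    (hx : x ∈ centralizer (closure (zpowConjugates w x) : Set G)) :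
    (closure (zpowConjugates w x)).Normal := by
  rw [← normalizer_eq_top_iff, eq_top_iff, ← hgen, closure_le]
  rintro g (rfl | rfl)
  · exact centralizer_le_normalizer _ hx
  · exact normalizer_le_normalizer_closure _ mem_normalizer_zpowConjugates

theorem conj_pow_mul_zpow {b : G} (hb : ∀ y ∈ zpowConjugates w x, Commute b y) (k : ℤ) (j : ℕ) :
    ((b * w ^ k) ^ j)⁻¹ * x * (b * w ^ k) ^ j = (w ^ (k * j))⁻¹ * x * w ^ (k * j) := by
  induction j with
  | zero => simp
  | succ j ih =>
    calc ((b * w ^ k) ^ (j + 1))⁻¹ * x * (b * w ^ k) ^ (j + 1)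
        = (w ^ k)⁻¹ * (b⁻¹ * (((b * w ^ k) ^ j)⁻¹ * x * (b * w ^ k) ^ j) * b) * w ^ k := by
          rw [pow_succ]; group
      _ = (w ^ (k * (j + 1 : ℕ)))⁻¹ * x * w ^ (k * (j + 1 : ℕ)) := by
          rw [ih, (hb _ ⟨k * j, rfl⟩).inv_mul_cancel]; push_cast; group

theorem mem_zpowers_zpow_of_not_dvd {p n : ℕ} (hp : p.Prime) (hw : orderOf w = p ^ n) {k : ℤ}
    (hk : ¬(p : ℤ) ∣ k) : w ∈ zpowers (w ^ k) := by
  rw [mem_zpowers_zpow_iff, hw]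
  exact Nat.Coprime.pow_right n (Nat.coprime_comm.mp ((hp.coprime_iff_not_dvd).mpr
    (Int.natCast_dvd.not.mp hk)))

theorem closure_zpowConjugates_le {p : ℕ} (hp : p.Prime) (hx : Commute x (w ^ p))
    {M : Subgroup G} (hxM : x ∈ M) {b : G} (hb : ∀ y ∈ zpowConjugates w x, Commute b y)
    {k : ℤ} (hk : ¬(p : ℤ) ∣ k) (hg : b * w ^ k ∈ M) : closure (zpowConjugates w x) ≤ M := by
  rw [closure_le]
  rintro _ ⟨i, rfl⟩
  obtain ⟨j, hj⟩ := Int.exists_natCast_mul_emod_eq hp hk i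
  dsimp only
  rw [conj_zpow_emod hx i, ← hj, ← conj_zpow_emod hx, ← conj_pow_mul_zpow hb]
  exact M.mul_mem (M.mul_mem (M.inv_mem (M.pow_mem hg j)) hxM) (M.pow_mem hg j)

theorem le_zpowers_sup_closure_zpowConjugates {p n : ℕ} (hp : p.Prime) (hw : orderOf w = p ^ n)
    (hgen : closure {x, w} = ⊤) (hx : Commute x (w ^ p))
    (hB : closure (zpowConjugates w x) ≤ centralizer (closure (zpowConjugates w x) : Set G))
    {M : Subgroup G} (hxM : x ∈ M) (hM : M ≠ ⊤) :
    M ≤ zpowers (w ^ p) ⊔ closure (zpowConjugates w x) := by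
  set B := closure (zpowConjugates w x)
  have hxB : x ∈ B := subset_closure ⟨0, by simp⟩
  have := normal_closure_zpowConjugates hgen (hB hxB)
  have hsup : B ⊔ zpowers w = ⊤ := by
    rw [eq_top_iff, ← hgen, closure_le]
    rintro g (rfl | rfl)
    · exact mem_sup_left hxB
    · exact mem_sup_right (mem_zpowers g)
  intro g hgM
  obtain ⟨b, hbB, z, hz, rfl⟩ := mem_sup_of_normal_left.mp (hsup ▸ mem_top g)
  obtain ⟨k, rfl⟩ := mem_zpowers_iff.mp hz
  by_cases hk : (p : ℤ) ∣ k
  · obtain ⟨t, rfl⟩ := hk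
    refine mul_mem (mem_sup_right hbB) (mem_sup_left ?_)
    rw [zpow_mul, zpow_natCast]
    exact zpow_mem_zpowers _ _
  · have hb : ∀ y ∈ zpowConjugates w x, Commute b y := fun y hy =>
      (mem_centralizer_iff.mp (hB hbB) y (subset_closure hy)).symm
    have hBM := closure_zpowConjugates_le hp hx hxM hb hk hgM
    have hwM : w ∈ M := by
      have hwk : w ^ k ∈ M := by simpa using M.mul_mem (M.inv_mem (hBM hbB)) hgM
      exact zpowers_le.mpr hwk (mem_zpowers_zpow_of_not_dvd hp hw hk)
    refine absurd (eq_top_iff.mpr ?_) hM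
    rw [← hgen, closure_le]
    rintro _ (rfl | rfl) <;> assumption

end

theorem unique_maximal_overgroup_abelian_general (G : Type) [Group G]
    (p : ℕ) (hp : p.Prime) (w x : G) (hw : ∃ n : ℕ, orderOf w = p ^ n)
    (hgen : Subgroup.closure {x, w} = ⊤)
    (A : Subgroup G)
    (hA : A = Subgroup.closure
      ({w ^ p} ∪ Set.range fun i : Fin p => (w ^ (i : ℕ))⁻¹ * x * w ^ (i : ℕ)))
    (hab : ∀ a ∈ A, ∀ b ∈ A, a * b = b * a)
    (hwA : w ∉ A) :
    IsCoatom A ∧ x ∈ A ∧ ∀ M : Subgroup G, IsCoatom M → x ∈ M → M = A := by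
  obtain ⟨n, hn⟩ := hw
  have hxA : x ∈ A := hA ▸ subset_closure (Or.inr ⟨⟨0, hp.pos⟩, by simp⟩)
  have hx : Commute x (w ^ p) := hab x hxA _ (hA ▸ subset_closure (Or.inl rfl))
  have hA_sup : A = zpowers (w ^ p) ⊔ closure (zpowConjugates w x) := by
    rw [hA, Subgroup.closure_union, zpowConjugates_eq_range_fin hp.pos hx, zpowers_eq_closure]
  have hBA : closure (zpowConjugates w x) ≤ A := hA_sup ▸ le_sup_right
  have hle : ∀ M : Subgroup G, zpowers x ≤ M → M ≠ ⊤ → M ≤ A := fun M hxM hM =>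
    hA_sup ▸ le_zpowers_sup_closure_zpowConjugates hp hn hgen hx
      (fun a ha => mem_centralizer_iff.mpr fun b hb => hab b (hBA hb) a (hBA ha))
      (zpowers_le.mp hxM) hM
  have hAtop : A ≠ ⊤ := fun h => hwA (h ▸ mem_top w)
  refine ⟨isCoatom_of_forall_ne_top_le hAtop (zpowers_le.mpr hxA) hle, hxA, fun M hM hxM => ?_⟩
  exact ((hM.le_iff_eq hAtop).mp (hle M (zpowers_le.mpr hxM) hM.1)).symm

/-- Group-theoretic core of Proposition 5.1: if `G = ⟨x, w⟩` with `w` a `p`-element,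
and the subgroup `A` generated by the conjugates `x^{w^i}` (`0 ≤ i ≤ p-1`) together
with `w^p` is abelian and does not contain `w`, then `A` is the unique maximal
subgroup of `G` containing `x`. -/
theorem unique_maximal_overgroup_abelian (G : Type) [Group G] [Finite G]
    (p : ℕ) (hp : p.Prime) (w x : G) (hw : ∃ n : ℕ, orderOf w = p ^ n)
    (hgen : Subgroup.closure {x, w} = ⊤)
    (A : Subgroup G)
    (hA : A = Subgroup.closure
      ({w ^ p} ∪ Set.range fun i : Fin p => (w ^ (i : ℕ))⁻¹ * x * w ^ (i : ℕ)))
    (hab : ∀ a ∈ A, ∀ b ∈ A, a * b = b * a)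
    (hwA : w ∉ A) :
    IsCoatom A ∧ x ∈ A ∧ ∀ M : Subgroup G, IsCoatom M → x ∈ M → M = A :=
  unique_maximal_overgroup_abelian_general G p hp w x hw hgen A hA hab hwA
end
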